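/- Let σ ∈ (0,1), γ ∈ (0,2), λ > 0, let A : H → Set H be β-strongly monotone (β > 0) and B : H → H be monotone, and let u* ∈ Ω. Suppose w, v ∈ H satisfy w − λB(w) ∈ v + λA(v) and λ‖B(w) − B(v)‖ ≤ σ‖w − v‖, set φ = (w − v) − λ(B(w) − B(v)), assume φ ≠ 0, and let δ = ⟨w − v, φ⟩/‖φ‖² and u⁺ = w − γδφ. Then ‖u⁺ − u*‖² ≤ ‖w − u*‖² − γ(2 − γ)·((1 − σ)²/(1 + σ)²)·‖w − v‖² − 2γλβ·((1 − σ)²/(1 + σ)²)·‖v − u*‖². -/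

import Mathlib

/-!
The update `u⁺ = w - γ δ φ` is a relaxed projection of `w` onto the half-space
`{z | ⟪z - v, φ⟫ ≤ 0}`, so `‖u⁺ - u*‖²` expands exactly as
`‖w - u*‖² - γ(2 - γ) δ ⟪w - v, φ⟫ - 2γδ ⟪v - u*, φ⟫`.
Since `φ = λ(a + B v)` with `a ∈ A v` and `-B u* ∈ A u*`, strong monotonicity of `A + B` gives
`⟪v - u*, φ⟫ ≥ λβ‖v - u*‖²`. The Lipschitz-type bound `λ‖B w - B v‖ ≤ σ‖w - v‖` gives
`⟪w - v, φ⟫ ≥ (1 - σ)‖w - v‖²` and `‖φ‖ ≤ (1 + σ)‖w - v‖`, hence `δ ≥ (1 - σ)²/(1 + σ)²` and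
`δ ⟪w - v, φ⟫ ≥ (1 - σ)²/(1 + σ)² ‖w - v‖²`.
-/

open RealInnerProductSpace

section
variable {H : Type*} [NormedAddCommGroup H] [InnerProductSpace ℝ H]

lemma one_sub_mul_norm_sq_le_inner_sub {σ : ℝ} {x y : H} (hy : ‖y‖ ≤ σ * ‖x‖) :
    (1 - σ) * ‖x‖ ^ 2 ≤ ⟪x, x - y⟫ := by
  have hxy := real_inner_le_norm x y
  rw [inner_sub_right, real_inner_self_eq_norm_sq]
  nlinarith [norm_nonneg x]

lemma stepsize_bounds_of_norm_le_mul {σ : ℝ} (hσ0 : 0 ≤ σ) (hσ1 : σ < 1) {x y : H}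
    (hy : ‖y‖ ≤ σ * ‖x‖) (hxy : x - y ≠ 0) :
    (1 - σ) ^ 2 / (1 + σ) ^ 2 ≤ ⟪x, x - y⟫ / ‖x - y‖ ^ 2 ∧
      (1 - σ) ^ 2 / (1 + σ) ^ 2 * ‖x‖ ^ 2 ≤ ⟪x, x - y⟫ / ‖x - y‖ ^ 2 * ⟪x, x - y⟫ := by
  have hx : 0 < ‖x‖ := by
    refine norm_pos_iff.mpr fun hx => hxy ?_
    rw [hx, norm_zero, mul_zero, norm_le_zero_iff] at hy
    rw [hx, hy, sub_zero]
  have ht := one_sub_mul_norm_sq_le_inner_sub hy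
  have hp : ‖x - y‖ ≤ (1 + σ) * ‖x‖ := by linarith [norm_sub_le x y]
  have hp0 : 0 < ‖x - y‖ := norm_pos_iff.mpr hxy
  have hp2 : ‖x - y‖ ^ 2 ≤ (1 + σ) ^ 2 * ‖x‖ ^ 2 := by
    rw [← mul_pow]; exact pow_le_pow_left₀ hp0.le hp 2
  have hs : 0 < (1 + σ) ^ 2 := by positivity
  constructor
  · rw [div_le_div_iff₀ hs (by positivity)]
    nlinarith [mul_le_mul_of_nonneg_left hp2 (sq_nonneg (1 - σ)), sq_nonneg ‖x‖,
      mul_nonneg (mul_nonneg hσ0 (sq_nonneg ‖x‖)) hs.le]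
  · rw [div_mul_eq_mul_div, div_mul_eq_mul_div, div_le_div_iff₀ hs (by positivity)]
    have ht2 : ((1 - σ) * ‖x‖ ^ 2) ^ 2 ≤ ⟪x, x - y⟫ ^ 2 :=
      pow_le_pow_left₀ (by nlinarith) ht 2
    nlinarith [mul_le_mul_of_nonneg_left hp2 (sq_nonneg ((1 - σ) * ‖x‖))]

lemma norm_sub_relaxed_projection_sq (w v u φ : H) (γ : ℝ) :
    ‖w - (γ * (⟪w - v, φ⟫ / ‖φ‖ ^ 2)) • φ - u‖ ^ 2 =
      ‖w - u‖ ^ 2 - γ * (2 - γ) * (⟪w - v, φ⟫ / ‖φ‖ ^ 2) * ⟪w - v, φ⟫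
        - 2 * γ * (⟪w - v, φ⟫ / ‖φ‖ ^ 2) * ⟪v - u, φ⟫ := by
  have hsplit : ⟪w - u, φ⟫ = ⟪w - v, φ⟫ + ⟪v - u, φ⟫ := by
    rw [← inner_add_left, sub_add_sub_cancel]
  have hδ : (⟪w - v, φ⟫ / ‖φ‖ ^ 2) ^ 2 * ‖φ‖ ^ 2 = ⟪w - v, φ⟫ / ‖φ‖ ^ 2 * ⟪w - v, φ⟫ := by
    rcases eq_or_ne ‖φ‖ 0 with h | h
    · simp [h]
    · field_simp
  rw [sub_right_comm, norm_sub_sq_real, real_inner_smul_right, norm_smul, mul_pow,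
    Real.norm_eq_abs, sq_abs, hsplit]
  linear_combination γ ^ 2 * hδ

lemma inner_add_ge_of_strongly_monotone {A : H → Set H} {B : H → H} {β : ℝ}
    (hA : ∀ u v : H, ∀ a ∈ A u, ∀ b ∈ A v, β * ‖u - v‖ ^ 2 ≤ ⟪a - b, u - v⟫)
    (hB : ∀ u v : H, 0 ≤ ⟪B u - B v, u - v⟫) {u v a : H} (hu : -B u ∈ A u) (ha : a ∈ A v) :
    β * ‖v - u‖ ^ 2 ≤ ⟪a + B v, v - u⟫ := by
  have hsplit : a + B v = (a - -B u) + (B v - B u) := by abel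
  rw [hsplit, inner_add_left]
  linarith [hA v u a ha (-B u) hu, hB v u]

end

theorem contraction_step_strongly_monotone_inequality_general
    {H : Type*} [NormedAddCommGroup H] [InnerProductSpace ℝ H]
    (σ γ lam : ℝ) (hσ : σ ∈ Set.Ioo (0 : ℝ) 1) (hγ : γ ∈ Set.Ioo (0 : ℝ) 2) (hlam : 0 < lam)
    (A : H → Set H) (B : H → H) (β : ℝ) (hβ : 0 < β)
    (hAsmono : ∀ u v : H, ∀ a ∈ A u, ∀ b ∈ A v, β * ‖u - v‖ ^ 2 ≤ ⟪a - b, u - v⟫)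
    (hBmono : ∀ u v : H, 0 ≤ ⟪B u - B v, u - v⟫)
    (ustar : H) (hstar : -B ustar ∈ A ustar)
    (w v : H)
    (hfb : ∃ a ∈ A v, w - lam • B w = v + lam • a)
    (hls : lam * ‖B w - B v‖ ≤ σ * ‖w - v‖)
    (φ : H) (hφdef : φ = (w - v) - lam • (B w - B v)) (hφ : φ ≠ 0)
    (δ : ℝ) (hδ : δ = ⟪w - v, φ⟫ / ‖φ‖ ^ 2)
    (uplus : H) (huplus : uplus = w - (γ * δ) • φ) :
    ‖uplus - ustar‖ ^ 2 ≤
      ‖w - ustar‖ ^ 2 - γ * (2 - γ) * ((1 - σ) ^ 2 / (1 + σ) ^ 2) * ‖w - v‖ ^ 2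
        - 2 * γ * lam * β * ((1 - σ) ^ 2 / (1 + σ) ^ 2) * ‖v - ustar‖ ^ 2 := by
  obtain ⟨a, ha, hwv⟩ := hfb
  have hφa : φ = lam • (a + B v) := by
    rw [hφdef, smul_add, smul_sub, eq_sub_of_add_eq' hwv.symm]
    abel
  have hBlip : ‖lam • (B w - B v)‖ ≤ σ * ‖w - v‖ := by
    rwa [norm_smul, Real.norm_of_nonneg hlam.le]
  obtain ⟨hcδ, hcδt⟩ := stepsize_bounds_of_norm_le_mul hσ.1.le hσ.2 hBlip (hφdef ▸ hφ)
  rw [← hφdef, ← hδ] at hcδ hcδt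
  have hmono : lam * β * ‖v - ustar‖ ^ 2 ≤ ⟪v - ustar, φ⟫ := by
    rw [hφa, real_inner_smul_right, real_inner_comm, mul_assoc]
    exact mul_le_mul_of_nonneg_left
      (inner_add_ge_of_strongly_monotone hAsmono hBmono hstar ha) hlam.le
  rw [huplus, hδ, norm_sub_relaxed_projection_sq, ← hδ]
  have hc : 0 ≤ (1 - σ) ^ 2 / (1 + σ) ^ 2 := by positivity
  have hγ2 : 0 ≤ γ * (2 - γ) := mul_nonneg hγ.1.le (by linarith [hγ.2])
  have hstrong : (1 - σ) ^ 2 / (1 + σ) ^ 2 * (lam * β * ‖v - ustar‖ ^ 2) ≤ δ * ⟪v - ustar, φ⟫ :=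
    mul_le_mul hcδ hmono (mul_nonneg (mul_nonneg hlam.le hβ.le) (sq_nonneg _)) (hc.trans hcδ)
  linarith [mul_le_mul_of_nonneg_left hcδt hγ2,
    mul_le_mul_of_nonneg_left hstrong (by linarith [hγ.1] : (0 : ℝ) ≤ 2 * γ)]

/-- One-step inequality under `β`-strong monotonicity of `A`:
`‖u⁺ - u*‖² ≤ ‖w - u*‖² - γ(2 - γ)((1 - σ)²/(1 + σ)²)‖w - v‖²
  - 2γλβ((1 - σ)²/(1 + σ)²)‖v - u*‖²`. -/
theorem contraction_step_strongly_monotone_inequality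
    {H : Type*} [NormedAddCommGroup H] [InnerProductSpace ℝ H] [CompleteSpace H]
    (σ γ lam : ℝ) (hσ : σ ∈ Set.Ioo (0 : ℝ) 1) (hγ : γ ∈ Set.Ioo (0 : ℝ) 2) (hlam : 0 < lam)
    (A : H → Set H) (B : H → H) (β : ℝ) (hβ : 0 < β)
    (hAsmono : ∀ u v : H, ∀ a ∈ A u, ∀ b ∈ A v, β * ‖u - v‖ ^ 2 ≤ ⟪a - b, u - v⟫)
    (hBmono : ∀ u v : H, 0 ≤ ⟪B u - B v, u - v⟫)
    (ustar : H) (hstar : -B ustar ∈ A ustar)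
    (w v : H)
    (hfb : ∃ a ∈ A v, w - lam • B w = v + lam • a)
    (hls : lam * ‖B w - B v‖ ≤ σ * ‖w - v‖)
    (φ : H) (hφdef : φ = (w - v) - lam • (B w - B v)) (hφ : φ ≠ 0)
    (δ : ℝ) (hδ : δ = ⟪w - v, φ⟫ / ‖φ‖ ^ 2)
    (uplus : H) (huplus : uplus = w - (γ * δ) • φ) :
    ‖uplus - ustar‖ ^ 2 ≤
      ‖w - ustar‖ ^ 2 - γ * (2 - γ) * ((1 - σ) ^ 2 / (1 + σ) ^ 2) * ‖w - v‖ ^ 2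
        - 2 * γ * lam * β * ((1 - σ) ^ 2 / (1 + σ) ^ 2) * ‖v - ustar‖ ^ 2 :=
  contraction_step_strongly_monotone_inequality_general σ γ lam hσ hγ hlam A B β hβ hAsmono hBmono
    ustar hstar w v hfb hls φ hφdef hφ δ hδ uplus huplus
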